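/- arXiv:2005.08241 — 2 statements merged into one kernel-verified Lean document; each statement's English description precedes it below -/
import Mathlib

section
/- Let f: ℝⁿ → ℝⁿ be continuously differentiable and suppose there exist λ ≥ 0, ε > 0, and a symmetric positive definite matrix P ∈ ℝ^{n×n} such that for every x ∈ ℝⁿ, Df(x)ᵀP + P·Df(x) + 2λP ≼ −εI, where Df(x) denotes the Jacobian of f at x. If the system ẋ = f(x) admits a solution on [0, ∞) with bounded range, then f has a unique zero x* ∈ ℝⁿ, and every solution x: [0, ∞) → ℝⁿ of ẋ = f(x) with bounded range satisfies x(t) → x* as t → ∞. -/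
open Matrix Polynomial

open scoped Classical in
/-- Number of eigenvalues (roots of the complex characteristic polynomial, counted with
algebraic multiplicity) of a real matrix satisfying a predicate. -/
noncomputable def eigCount {n : Type*} [Fintype n] [DecidableEq n]
    (A : Matrix n n ℝ) (p : ℂ → Prop) : ℕ :=
  Multiset.card (((A.map (Complex.ofReal)).charpoly.roots).filter p)

/-- A real symmetric matrix has inertia `(neg, 0, pos)`: `neg` negative eigenvalues,
no zero eigenvalues, and `pos` positive eigenvalues, counted with multiplicity. -/
def hasInertia {n : Type*} [Fintype n] [DecidableEq n]
    (P : Matrix n n ℝ) (neg pos : ℕ) : Prop :=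
  eigCount P (fun z => z.re < 0) = neg ∧
  eigCount P (fun z => z.re = 0) = 0 ∧
  eigCount P (fun z => 0 < z.re) = pos

/-- Jacobian matrix of a map `f : ℝⁿ → ℝⁿ` at `x`. -/
noncomputable def jacobian {n : Type*} [Fintype n] [DecidableEq n]
    (f : (n → ℝ) → (n → ℝ)) (x : n → ℝ) : Matrix n n ℝ :=
  LinearMap.toMatrix' (fderiv ℝ f x).toLinearMap

/-- Largest singular value of a complex matrix (its ℓ² → ℓ² operator norm). -/
noncomputable def sigmaMax {l m : Type*} [Fintype l] [Fintype m] [DecidableEq m]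
    (M : Matrix l m ℂ) : ℝ :=
  ‖LinearMap.toContinuousLinearMap (Matrix.toEuclideanLin M)‖

/-- Shifted transfer function `C ((iω − λ)I − A)⁻¹ B` evaluated on the line `Re s = −λ`. -/
noncomputable def shiftedTF {n m l : ℕ} (A : Matrix (Fin n) (Fin n) ℝ)
    (B : Matrix (Fin n) (Fin m) ℝ) (C : Matrix (Fin l) (Fin n) ℝ) (lam ω : ℝ) :
    Matrix (Fin l) (Fin m) ℂ :=
  (C.map Complex.ofReal) *
    ((((ω : ℂ) * Complex.I - (lam : ℂ)) • (1 : Matrix (Fin n) (Fin n) ℂ)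
      - A.map Complex.ofReal)⁻¹) *
    (B.map Complex.ofReal)

/-- `x` is a solution of `ẋ = f(x)` on `[0, ∞)`. -/
def isSolutionOn {n : ℕ} (f : (Fin n → ℝ) → (Fin n → ℝ)) (x : ℝ → (Fin n → ℝ)) : Prop :=
  ∀ t ∈ Set.Ici (0 : ℝ), HasDerivAt x (f (x t)) t

/-- `x` has bounded range on `[0, ∞)`. -/
def boundedOn {n : ℕ} (x : ℝ → (Fin n → ℝ)) : Prop :=
  Bornology.IsBounded (x '' Set.Ici (0 : ℝ))

/-!
The quadratic form `V(v) = vᵀPv` is comparable to `‖v‖²`, and the matrix inequality, integrated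
along the segment from `b` to `a`, gives `2 (a - b)ᵀP(f a - f b) ≤ -ε |a - b|²`. Hence `V(x - y)`
decays exponentially along any two solutions `x`, `y`: solutions contract towards each other.
Comparing a bounded solution with its own time shifts shows that it is Cauchy at infinity; its
limit `x*` is an equilibrium since `ẋ = f(x) → f(x*)`. Comparing any solution with the constant
solution `x*` gives convergence, and comparing two equilibria gives uniqueness.
-/
open Filter Topology Set

section HomogeneousBounds

variable {E : Type*} [NormedAddCommGroup E] [NormedSpace ℝ E] {q : E → ℝ}

lemma eq_sq_norm_mul_of_homogeneous (hq : ∀ (c : ℝ) v, q (c • v) = c ^ 2 * q v) {v : E}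
    (hv : v ≠ 0) : q v = ‖v‖ ^ 2 * q (‖v‖⁻¹ • v) := by
  rw [hq, ← mul_assoc, ← mul_pow, mul_inv_cancel₀ (norm_ne_zero_iff.2 hv), one_pow, one_mul]

lemma map_zero_of_homogeneous (hq : ∀ (c : ℝ) v, q (c • v) = c ^ 2 * q v) : q 0 = 0 := by
  simpa using hq 0 0

variable [FiniteDimensional ℝ E]

lemma exists_le_mul_sq_norm_of_homogeneous (hc : Continuous q)
    (hq : ∀ (c : ℝ) v, q (c • v) = c ^ 2 * q v) : ∃ C > 0, ∀ v, q v ≤ C * ‖v‖ ^ 2 := by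
  obtain ⟨C, hC⟩ := (isCompact_sphere (0 : E) 1).exists_bound_of_continuousOn hc.continuousOn
  refine ⟨max C 1, by positivity, fun v => ?_⟩
  rcases eq_or_ne v 0 with rfl | hv
  · simp [map_zero_of_homogeneous hq]
  rw [eq_sq_norm_mul_of_homogeneous hq hv, mul_comm]
  gcongr
  have hu : ‖v‖⁻¹ • v ∈ Metric.sphere (0 : E) 1 := by
    simp [norm_smul, norm_ne_zero_iff.2 hv]
  exact (le_abs_self _).trans ((hC _ hu).trans (le_max_left _ _))

lemma exists_pos_mul_sq_norm_le_of_homogeneous (hc : Continuous q)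
    (hq : ∀ (c : ℝ) v, q (c • v) = c ^ 2 * q v) (hpos : ∀ v ≠ 0, 0 < q v) :
    ∃ m > 0, ∀ v, m * ‖v‖ ^ 2 ≤ q v := by
  cases subsingleton_or_nontrivial E
  · exact ⟨1, one_pos, fun v => by simp [Subsingleton.elim v 0, map_zero_of_homogeneous hq]⟩
  obtain ⟨u, hu, hmin⟩ := (isCompact_sphere (0 : E) 1).exists_isMinOn
    (NormedSpace.sphere_nonempty.2 zero_le_one) hc.continuousOn
  refine ⟨q u, hpos u (by rintro rfl; simp at hu), fun v => ?_⟩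
  rcases eq_or_ne v 0 with rfl | hv
  · simp [map_zero_of_homogeneous hq]
  rw [eq_sq_norm_mul_of_homogeneous hq hv, mul_comm]
  gcongr
  exact hmin (by simp [norm_smul, norm_ne_zero_iff.2 hv])

end HomogeneousBounds

lemma apply_sub_le_of_forall_fderiv_le {E F : Type*} [NormedAddCommGroup E] [NormedSpace ℝ E]
    [NormedAddCommGroup F] [NormedSpace ℝ F] {f : E → F} (hf : Differentiable ℝ f)
    (ℓ : F →L[ℝ] ℝ) (a b : E) {r : ℝ} (h : ∀ x, ℓ (fderiv ℝ f x (a - b)) ≤ r) :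
    ℓ (f a - f b) ≤ r := by
  have hg : ∀ s : ℝ, HasDerivAt (fun s : ℝ => ℓ (f (b + s • (a - b))))
      (ℓ (fderiv ℝ f (b + s • (a - b)) (a - b))) s := fun s =>
    ℓ.hasFDerivAt.comp_hasDerivAt s ((hf _).hasFDerivAt.comp_hasDerivAt s
      (((hasDerivAt_id s).smul_const (a - b)).const_add b |>.congr_deriv (one_smul _ _)))
  have := image_sub_le_mul_sub_of_deriv_le (fun s => (hg s).differentiableAt)
    (fun s => (hg s).deriv ▸ h _) zero_le_one
  simpa using this

lemma le_mul_exp_of_hasDerivAt_le_neg_mul {V V' : ℝ → ℝ} {k : ℝ}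
    (hV : ∀ t ≥ 0, HasDerivAt V (V' t) t) (hV' : ∀ t ≥ 0, V' t ≤ -k * V t) {t : ℝ}
    (ht : 0 ≤ t) : V t ≤ V 0 * Real.exp (-(k * t)) := by
  have hW : ∀ s ≥ 0, HasDerivAt (fun s => V s * Real.exp (k * s))
      ((V' s + k * V s) * Real.exp (k * s)) s := fun s hs =>
    ((hV s hs).fun_mul ((hasDerivAt_id' s).const_mul k).exp).congr_deriv (by ring)
  have hanti : AntitoneOn (fun s => V s * Real.exp (k * s)) (Ici 0) :=
    antitoneOn_of_hasDerivWithinAt_nonpos (convex_Ici 0)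
      (fun s hs => (hW s hs).continuousAt.continuousWithinAt)
      (fun s hs => (hW s (interior_subset hs)).hasDerivWithinAt)
      (fun s hs => mul_nonpos_of_nonpos_of_nonneg
        (by linarith [hV' s (interior_subset hs)]) (Real.exp_pos _).le)
  have hWt : V t * Real.exp (k * t) ≤ V 0 := by simpa using hanti self_mem_Ici ht ht
  rw [Real.exp_neg, ← div_eq_mul_inv, le_div_iff₀ (Real.exp_pos _)]
  exact hWt

lemma tendsto_const_mul_exp_neg_mul_atTop (A : ℝ) {k : ℝ} (hk : 0 < k) :
    Tendsto (fun t => A * Real.exp (-(k * t))) atTop (𝓝 0) := by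
  simpa using (Real.tendsto_exp_comp_nhds_zero.2
    (tendsto_neg_atTop_atBot.comp (tendsto_id.const_mul_atTop hk))).const_mul A

lemma cauchySeq_of_dist_add_le {α : Type*} [PseudoMetricSpace α] {x : ℝ → α} {g : ℝ → ℝ}
    (hg : Tendsto g atTop (𝓝 0)) (h : ∀ t ≥ 0, ∀ τ ≥ 0, dist (x (t + τ)) (x t) ≤ g t) :
    CauchySeq x := by
  refine Metric.cauchySeq_iff'.2 fun η hη => ?_
  obtain ⟨T, hT⟩ := eventually_atTop.1 (hg.eventually (gt_mem_nhds hη))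
  refine ⟨max T 0, fun t ht => ?_⟩
  calc dist (x t) (x (max T 0)) = dist (x (max T 0 + (t - max T 0))) (x (max T 0)) := by
        rw [add_sub_cancel]
    _ ≤ g (max T 0) := h _ (le_max_right _ _) _ (sub_nonneg.2 ht)
    _ < η := hT _ (le_max_left _ _)

lemma eq_zero_of_tendsto_of_hasDerivAt {E : Type*} [NormedAddCommGroup E] [NormedSpace ℝ E]
    {x x' : ℝ → E} {a L : E} (hx : Tendsto x atTop (𝓝 a)) (hd : ∀ t ≥ 0, HasDerivAt x (x' t) t)
    (hx' : Tendsto x' atTop (𝓝 L)) : L = 0 := by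
  refine eq_of_forall_dist_le fun η hη => ?_
  obtain ⟨T, hT⟩ := eventually_atTop.1 (hx'.eventually (Metric.closedBall_mem_nhds L hη))
  have hstep : ∀ t ≥ max T 0, ‖x (t + 1) - x t - L‖ ≤ η := fun t ht => by
    have hmvt := norm_image_sub_le_of_norm_deriv_le_segment' (f := fun s => x s - s • L)
      (fun s hs => ((hd s (by linarith [le_max_right T 0, hs.1])).sub
        ((hasDerivAt_id s).smul_const L)).hasDerivWithinAt)
      (fun s hs => by simpa [dist_eq_norm] using hT s (by linarith [le_max_left T 0, hs.1]))
      (t + 1) ⟨by linarith, le_rfl⟩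
    convert hmvt using 2
    · rw [add_smul, one_smul]; abel
    · ring
  have hlim : Tendsto (fun t => ‖x (t + 1) - x t - L‖) atTop (𝓝 ‖a - a - L‖) :=
    (((hx.comp (tendsto_atTop_add_const_right _ 1 tendsto_id)).sub hx).sub_const L).norm
  simpa [dist_eq_norm] using le_of_tendsto hlim (eventually_atTop.2 ⟨_, hstep⟩)

section QuadraticForm

variable {ι : Type*} [Fintype ι]

lemma HasDerivAt.dotProduct {u v : ℝ → ι → ℝ} {u' v' : ι → ℝ} {t : ℝ}
    (hu : HasDerivAt u u' t) (hv : HasDerivAt v v' t) :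
    HasDerivAt (fun s => u s ⬝ᵥ v s) (u' ⬝ᵥ v t + u t ⬝ᵥ v') t := by
  have := HasDerivAt.fun_sum (u := Finset.univ) fun i _ =>
    (hasDerivAt_pi.1 hu i).mul (hasDerivAt_pi.1 hv i)
  rw [Finset.sum_add_distrib] at this
  exact this

lemma HasDerivAt.dotProduct_mulVec_self {A : Matrix ι ι ℝ} (hA : Aᵀ = A) {u : ℝ → ι → ℝ}
    {u' : ι → ℝ} {t : ℝ} (hu : HasDerivAt u u' t) :
    HasDerivAt (fun s => u s ⬝ᵥ A *ᵥ u s) (2 * (u t ⬝ᵥ A *ᵥ u')) t := by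
  have hAu : HasDerivAt (fun s => A *ᵥ u s) (A *ᵥ u') t :=
    (LinearMap.toContinuousLinearMap A.mulVecLin).hasFDerivAt.comp_hasDerivAt t hu
  convert hu.dotProduct hAu using 1
  have hsymm : u' ᵥ* A = A *ᵥ u' := by rw [← vecMul_transpose, hA]
  rw [dotProduct_comm, dotProduct_mulVec, hsymm]
  ring

lemma dotProduct_mulVec_smul_self (A : Matrix ι ι ℝ) (c : ℝ) (v : ι → ℝ) :
    (c • v) ⬝ᵥ A *ᵥ (c • v) = c ^ 2 * (v ⬝ᵥ A *ᵥ v) := by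
  simp only [mulVec_smul, dotProduct_smul, smul_dotProduct, smul_eq_mul]
  ring

lemma exists_dotProduct_mulVec_le (A : Matrix ι ι ℝ) :
    ∃ C > 0, ∀ v : ι → ℝ, v ⬝ᵥ A *ᵥ v ≤ C * ‖v‖ ^ 2 :=
  exists_le_mul_sq_norm_of_homogeneous (by fun_prop) (dotProduct_mulVec_smul_self A)

lemma Matrix.PosDef.exists_le_dotProduct_mulVec {A : Matrix ι ι ℝ} (hA : A.PosDef) :
    ∃ m > 0, ∀ v : ι → ℝ, m * ‖v‖ ^ 2 ≤ v ⬝ᵥ A *ᵥ v :=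
  exists_pos_mul_sq_norm_le_of_homogeneous (by fun_prop) (dotProduct_mulVec_smul_self A)
    fun _ hv => by simpa using hA.dotProduct_mulVec_pos hv

lemma sq_norm_le_dotProduct_self (v : ι → ℝ) : ‖v‖ ^ 2 ≤ v ⬝ᵥ v := by
  have hsum : 0 ≤ v ⬝ᵥ v := Finset.sum_nonneg fun i _ => mul_self_nonneg (v i)
  refine (Real.le_sqrt (norm_nonneg v) hsum).1 ((pi_norm_le_iff_of_nonneg (Real.sqrt_nonneg _)).2
    fun i => Real.abs_le_sqrt ?_)
  simpa [sq, dotProduct] using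
    Finset.single_le_sum (fun j _ => mul_self_nonneg (v j)) (Finset.mem_univ i)

variable [DecidableEq ι]

lemma two_mul_dotProduct_mulVec_mulVec_le {lam ε : ℝ} {P J : Matrix ι ι ℝ} (hlam : 0 ≤ lam)
    (hP : P.PosSemidef)
    (hLMI : ((-(ε • (1 : Matrix ι ι ℝ))) - (Jᵀ * P + P * J + (2 * lam) • P)).PosSemidef)
    (v : ι → ℝ) : 2 * (v ⬝ᵥ P *ᵥ (J *ᵥ v)) ≤ -ε * (v ⬝ᵥ v) := by
  have hPt : Pᵀ = P := hP.isHermitian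
  have hsymm : v ⬝ᵥ Jᵀ *ᵥ (P *ᵥ v) = v ⬝ᵥ P *ᵥ (J *ᵥ v) := by
    rw [dotProduct_mulVec, vecMul_transpose, dotProduct_comm, ← vecMul_transpose P v,
      hPt, ← dotProduct_mulVec]
  have hLMIv := hLMI.dotProduct_mulVec_nonneg v
  have hPv : 0 ≤ v ⬝ᵥ P *ᵥ v := by simpa using hP.dotProduct_mulVec_nonneg v
  simp only [star_trivial, sub_mulVec, add_mulVec, neg_mulVec, smul_mulVec, one_mulVec,
    ← mulVec_mulVec, dotProduct_sub, dotProduct_add, dotProduct_neg, dotProduct_smul,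
    smul_eq_mul, hsymm] at hLMIv
  nlinarith [mul_nonneg hlam hPv]

lemma jacobian_mulVec (f : (ι → ℝ) → ι → ℝ) (x v : ι → ℝ) : jacobian f x *ᵥ v = fderiv ℝ f x v := by
  rw [jacobian, ← Matrix.toLin'_apply, Matrix.toLin'_toMatrix']
  rfl

lemma two_mul_dotProduct_mulVec_sub_le {f : (ι → ℝ) → ι → ℝ} (hf : Differentiable ℝ f)
    {lam ε : ℝ} {P : Matrix ι ι ℝ} (hlam : 0 ≤ lam) (hP : P.PosSemidef)
    (hLMI : ∀ x, ((-(ε • (1 : Matrix ι ι ℝ))) -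
      ((jacobian f x)ᵀ * P + P * jacobian f x + (2 * lam) • P)).PosSemidef) (a b : ι → ℝ) :
    2 * ((a - b) ⬝ᵥ P *ᵥ (f a - f b)) ≤ -ε * ((a - b) ⬝ᵥ (a - b)) := by
  let ℓ : (ι → ℝ) →L[ℝ] ℝ :=
    LinearMap.toContinuousLinearMap (2 • (dotProductBilin ℝ ℝ (a - b)) ∘ₗ P.mulVecLin)
  have key := apply_sub_le_of_forall_fderiv_le hf ℓ a b fun x => by
    simpa [ℓ, ← jacobian_mulVec] using
      two_mul_dotProduct_mulVec_mulVec_le hlam hP (hLMI x) (a - b)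
  simpa [ℓ] using key

end QuadraticForm

section Solutions

variable {n : ℕ} {f : (Fin n → ℝ) → (Fin n → ℝ)}

lemma isSolutionOn_const {z : Fin n → ℝ} (hz : f z = 0) : isSolutionOn f fun _ => z :=
  fun t _ => by simpa [hz] using hasDerivAt_const t z

lemma isSolutionOn.comp_add_const {x : ℝ → Fin n → ℝ} (hx : isSolutionOn f x) {τ : ℝ}
    (hτ : 0 ≤ τ) : isSolutionOn f fun t => x (t + τ) := fun t ht =>
  (hx (t + τ) (add_nonneg ht hτ)).comp_add_const t τ

def IsExpContracting (f : (Fin n → ℝ) → (Fin n → ℝ)) (K k : ℝ) : Prop :=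
  ∀ x y, isSolutionOn f x → isSolutionOn f y → ∀ t ≥ 0,
    dist (x t) (y t) ≤ K * dist (x 0) (y 0) * Real.exp (-(k * t))

lemma isExpContracting_of_lmi (hf : Differentiable ℝ f) {lam ε : ℝ} (hlam : 0 ≤ lam)
    (hε : 0 < ε) {P : Matrix (Fin n) (Fin n) ℝ} (hP : P.PosDef)
    (hLMI : ∀ x, ((-(ε • (1 : Matrix (Fin n) (Fin n) ℝ))) -
      ((jacobian f x)ᵀ * P + P * jacobian f x + (2 * lam) • P)).PosSemidef) :
    ∃ K k : ℝ, 0 ≤ K ∧ 0 < k ∧ IsExpContracting f K k := by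
  obtain ⟨C, hC, hCP⟩ := exists_dotProduct_mulVec_le P
  obtain ⟨m, hm, hmP⟩ := hP.exists_le_dotProduct_mulVec
  -- `V` decays at rate `ε / C`; passing to `‖x - y‖` halves the rate and gives the gain `√(C / m)`
  refine ⟨√(C / m), ε / (2 * C), Real.sqrt_nonneg _, by positivity, fun x y hx hy t ht => ?_⟩
  set V : ℝ → ℝ := fun s => (x s - y s) ⬝ᵥ P *ᵥ (x s - y s)
  have hV' : ∀ s ≥ 0, 2 * ((x s - y s) ⬝ᵥ P *ᵥ (f (x s) - f (y s))) ≤ -(ε / C) * V s :=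
    fun s _ => by
      have hCs : ε / C * V s ≤ ε * ‖x s - y s‖ ^ 2 := by
        rw [div_mul_eq_mul_div, div_le_iff₀ hC, mul_assoc, mul_comm _ C]
        exact mul_le_mul_of_nonneg_left (hCP _) hε.le
      nlinarith [two_mul_dotProduct_mulVec_sub_le hf hlam hP.posSemidef hLMI (x s) (y s),
        sq_norm_le_dotProduct_self (x s - y s)]
  have hdecay : V t ≤ V 0 * Real.exp (-(ε / C * t)) :=
    le_mul_exp_of_hasDerivAt_le_neg_mul
      (fun s hs => ((hx s hs).sub (hy s hs)).dotProduct_mulVec_self hP.isHermitian) hV' ht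
  have hsq : dist (x t) (y t) ^ 2 ≤
      (√(C / m) * dist (x 0) (y 0) * Real.exp (-(ε / (2 * C) * t))) ^ 2 := by
    have hexp : Real.exp (-(ε / (2 * C) * t)) ^ 2 = Real.exp (-(ε / C * t)) := by
      rw [← Real.exp_nat_mul]
      congr 1
      field_simp
      ring
    rw [mul_pow, mul_pow, Real.sq_sqrt (by positivity), hexp, dist_eq_norm, dist_eq_norm]
    calc ‖x t - y t‖ ^ 2 ≤ V t / m := by rw [le_div_iff₀ hm, mul_comm]; exact hmP _
      _ ≤ V 0 * Real.exp (-(ε / C * t)) / m := by gcongr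
      _ ≤ C * ‖x 0 - y 0‖ ^ 2 * Real.exp (-(ε / C * t)) / m := by gcongr; exact hCP _
      _ = C / m * ‖x 0 - y 0‖ ^ 2 * Real.exp (-(ε / C * t)) := by ring
  exact (pow_le_pow_iff_left₀ dist_nonneg (by positivity) two_ne_zero).1 hsq

variable {K k : ℝ}

lemma IsExpContracting.tendsto (hc : IsExpContracting f K k) (hk : 0 < k)
    {x : ℝ → Fin n → ℝ} (hx : isSolutionOn f x) {z : Fin n → ℝ} (hz : f z = 0) :
    Tendsto x atTop (𝓝 z) :=
  tendsto_iff_dist_tendsto_zero.2 <| squeeze_zero' (Eventually.of_forall fun _ => dist_nonneg)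
    (eventually_atTop.2 ⟨0, fun t ht => hc x _ hx (isSolutionOn_const hz) t ht⟩)
    (tendsto_const_mul_exp_neg_mul_atTop _ hk)

lemma IsExpContracting.exists_tendsto (hc : IsExpContracting f K k) (hK : 0 ≤ K) (hk : 0 < k)
    {x : ℝ → Fin n → ℝ} (hx : isSolutionOn f x) (hb : boundedOn x) :
    ∃ z, Tendsto x atTop (𝓝 z) := by
  obtain ⟨D, hD⟩ := Metric.isBounded_iff.1 hb
  refine cauchySeq_tendsto_of_complete <|
    cauchySeq_of_dist_add_le (tendsto_const_mul_exp_neg_mul_atTop (K * D) hk) fun t ht τ hτ => ?_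
  calc dist (x (t + τ)) (x t) ≤ K * dist (x (0 + τ)) (x 0) * Real.exp (-(k * t)) :=
        hc _ x (hx.comp_add_const hτ) hx t ht
    _ ≤ K * D * Real.exp (-(k * t)) := by
        gcongr
        exact hD (mem_image_of_mem x (by simpa using hτ)) (mem_image_of_mem x self_mem_Ici)

end Solutions

/-- (Asymptotic behavior of strictly `0`-dominant systems.)
If `f` is `C¹` and there are `λ ≥ 0`, `ε > 0` and a symmetric positive definite `P` with
`Df(x)ᵀP + P·Df(x) + 2λP ≼ −εI` for all `x`, and the system `ẋ = f(x)` admits a bounded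
solution on `[0, ∞)`, then `f` has a unique zero `x*`, and every bounded solution on
`[0, ∞)` converges to `x*`. -/
theorem statement2 {n : ℕ} (f : (Fin n → ℝ) → (Fin n → ℝ)) (hf : ContDiff ℝ 1 f)
    (lam ε : ℝ) (hlam : 0 ≤ lam) (hε : 0 < ε)
    (P : Matrix (Fin n) (Fin n) ℝ) (hP : P.PosDef)
    (hLMI : ∀ x : Fin n → ℝ,
      ((-(ε • (1 : Matrix (Fin n) (Fin n) ℝ))) -
        ((jacobian f x)ᵀ * P + P * jacobian f x + (2 * lam) • P)).PosSemidef)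
    (hexists : ∃ x : ℝ → (Fin n → ℝ), isSolutionOn f x ∧ boundedOn x) :
    ∃ xstar : Fin n → ℝ, f xstar = 0 ∧ (∀ y, f y = 0 → y = xstar) ∧
      ∀ x : ℝ → (Fin n → ℝ), isSolutionOn f x → boundedOn x →
        Filter.Tendsto x Filter.atTop (nhds xstar) := by
  obtain ⟨x₀, hx₀, hx₀b⟩ := hexists
  obtain ⟨K, k, hK, hk, hcontr⟩ :=
    isExpContracting_of_lmi (hf.differentiable one_ne_zero) hlam hε hP hLMI
  obtain ⟨xstar, hlim⟩ := hcontr.exists_tendsto hK hk hx₀ hx₀b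
  have hxstar : f xstar = 0 :=
    eq_zero_of_tendsto_of_hasDerivAt hlim hx₀ ((hf.continuous.tendsto xstar).comp hlim)
  refine ⟨xstar, hxstar, fun y hy => ?_, fun x hx _ => hcontr.tendsto hk hx hxstar⟩
  exact tendsto_nhds_unique tendsto_const_nhds (hcontr.tendsto hk (isSolutionOn_const hy) hxstar)
end

section
/- Let λ ∈ ℝ, A ∈ ℝ^{n×n} with all eigenvalues of A + λI having negative real part, B ∈ ℝ^{n×m}, C ∈ ℝ^{l×n}. Suppose Σ = diag(σ₁, …, σₙ) with σ₁ ≥ σ₂ ≥ … ≥ σₙ > 0 satisfies the shifted Lyapunov equations (A + λI)Σ + Σ(A + λI)ᵀ + BBᵀ = 0 and (A + λI)ᵀΣ + Σ(A + λI) + CᵀC = 0. Fix 1 ≤ ν < n with σ_ν > σ_{ν+1}, partition A = [[A₁₁, A₁₂], [A₂₁, A₂₂]] with A₁₁ ∈ ℝ^{ν×ν}. Then every eigenvalue of A₁₁ + λI has negative real part. -/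
open Matrix Polynomial

/-!
Replace `A` by `A + λI` and write `M`, `Σ₁` for the leading `ν × ν` blocks of `A`, `Σ`; the
leading blocks of the two Lyapunov equations are the Lyapunov equations of `(M, B₁, C₁)` with
gramian `Σ₁`. If `Mx = zx` with `Re z ≥ 0`, then `x*(Mᴴ Σ₁ + Σ₁ M + C₁ᴴ C₁)x = 2 Re z · x*Σ₁x +
‖C₁x‖² = 0` forces `Re z = 0` and `C₁x = 0`, so `Σ₁x` is an eigenvector of `Mᴴ` for `z̄`, and the
same argument on the reachability equation gives `B₁ᴴΣ₁x = 0`. Combining both equations, `M`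
commutes with `Σ₁²` on such vectors, so the `z`-eigenspace of `M` contains an eigenvector `x` of
`Σ₁²`, with eigenvalue `σⱼ²` for some retained `j`. Its zero extension `u` satisfies `Cu = 0` and
`BᴴΣu = 0`, and the full equations give `Σ²(Au) = σⱼ²·Au`. By the gap `σ_ν > σ_{ν+1}` the vector
`Au` vanishes off the retained coordinates, hence `Au = zu`, contradicting the stability of `A`.
-/

namespace Matrix

open scoped ComplexOrder

variable {n m p : Type*} [Fintype n] [Fintype m] [Fintype p]

theorem mem_roots_charpoly_iff_exists_mulVec_eq_smul {K : Type*} [Field K] [DecidableEq n]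
    (M : Matrix n n K) (z : K) :
    z ∈ M.charpoly.roots ↔ ∃ v ≠ 0, M *ᵥ v = z • v := by
  rw [mem_roots (charpoly_monic M).ne_zero, IsRoot, eval_charpoly,
    ← exists_mulVec_eq_zero_iff]
  simp only [sub_mulVec, scalar_apply, ← smul_one_eq_diagonal, smul_mulVec, one_mulVec,
    sub_eq_zero, eq_comm]

theorem exists_mulVec_eq_smul_of_mapsTo {K : Type*} [Field K] [IsAlgClosed K]
    {M N : Matrix n n K} {z : K} {v : n → K} (hv0 : v ≠ 0) (hv : M *ᵥ v = z • v)
    (hN : ∀ x, M *ᵥ x = z • x → M *ᵥ (N *ᵥ x) = z • (N *ᵥ x)) :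
    ∃ x ≠ 0, M *ᵥ x = z • x ∧ ∃ s : K, N *ᵥ x = s • x := by
  set E := Module.End.eigenspace (mulVecLin M) z
  have hNE : ∀ x ∈ E, mulVecLin N x ∈ E := by
    simpa [E, Module.End.mem_eigenspace_iff] using hN
  have : Nontrivial E := ⟨⟨v, by simpa [E, Module.End.mem_eigenspace_iff] using hv⟩, 0,
    fun h => hv0 (congrArg Subtype.val h)⟩
  obtain ⟨s, hs⟩ := Module.End.exists_eigenvalue ((mulVecLin N).restrict hNE)
  obtain ⟨⟨x, hxE⟩, hx⟩ := hs.exists_hasEigenvector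
  refine ⟨x, fun h => hx.2 (Subtype.ext h), ?_, s, ?_⟩
  · simpa [E, Module.End.mem_eigenspace_iff] using hxE
  · simpa using congrArg Subtype.val hx.apply_eq_smul

theorem conjTranspose_mulVec_of_lyapunov {R : Type*} [CommRing R] [StarRing R]
    {A S : Matrix n n R} {C : Matrix p n R} (hO : Aᴴ * S + S * A + Cᴴ * C = 0) {u : n → R}
    (hu : C *ᵥ u = 0) :
    Aᴴ *ᵥ (S *ᵥ u) = -(S *ᵥ (A *ᵥ u)) := by
  have h := congrArg (· *ᵥ u) hO
  simp only [add_mulVec, ← mulVec_mulVec, hu, mulVec_zero, add_zero, zero_mulVec] at h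
  exact eq_neg_of_add_eq_zero_left h

theorem mulVec_mulVec_comm_of_lyapunov {R : Type*} [CommRing R] [StarRing R]
    {A S : Matrix n n R} {B : Matrix n m R} {C : Matrix p n R}
    (hR : A * S + S * Aᴴ + B * Bᴴ = 0) (hO : Aᴴ * S + S * A + Cᴴ * C = 0) {u : n → R}
    (hC : C *ᵥ u = 0) (hB : Bᴴ *ᵥ (S *ᵥ u) = 0) :
    A *ᵥ (S *ᵥ (S *ᵥ u)) = S *ᵥ (S *ᵥ (A *ᵥ u)) := by
  have h := congrArg (· *ᵥ (S *ᵥ u)) hR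
  simp only [add_mulVec, ← mulVec_mulVec, hB, conjTranspose_mulVec_of_lyapunov hO hC,
    mulVec_neg, mulVec_zero, add_zero, zero_mulVec] at h
  exact add_neg_eq_zero.mp h

theorem re_eq_zero_and_mulVec_eq_zero_of_lyapunov {A S : Matrix n n ℂ} {C : Matrix p n ℂ}
    (hS : S.PosDef) (hO : Aᴴ * S + S * A + Cᴴ * C = 0) {z : ℂ} {x : n → ℂ} (hx0 : x ≠ 0)
    (hx : A *ᵥ x = z • x) (hz : 0 ≤ z.re) :
    z.re = 0 ∧ C *ᵥ x = 0 := by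
  have hq : 0 < star x ⬝ᵥ (S *ᵥ x) := hS.dotProduct_mulVec_pos hx0
  have hc : 0 ≤ star (C *ᵥ x) ⬝ᵥ (C *ᵥ x) := dotProduct_star_self_nonneg _
  have hquad : ((2 * z.re : ℝ) : ℂ) * (star x ⬝ᵥ (S *ᵥ x)) + star (C *ᵥ x) ⬝ᵥ (C *ᵥ x) = 0 := by
    have h := congrArg (star x ⬝ᵥ · *ᵥ x) hO
    simp only [add_mulVec, ← mulVec_mulVec, dotProduct_add, zero_mulVec, dotProduct_zero,
      dotProduct_mulVec (star x) Aᴴ, dotProduct_mulVec (star x) Cᴴ, ← star_mulVec,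
      hx, mulVec_smul, star_smul, smul_dotProduct, dotProduct_smul, smul_eq_mul,
      Complex.star_def] at h
    rw [← Complex.add_conj]
    linear_combination h
  have h2re : (0 : ℂ) ≤ ((2 * z.re : ℝ) : ℂ) := Complex.zero_le_real.mpr (by linarith)
  have hc0 : star (C *ᵥ x) ⬝ᵥ (C *ᵥ x) = 0 :=
    le_antisymm (by linear_combination hquad + mul_nonneg h2re hq.le) hc
  refine ⟨?_, dotProduct_star_self_eq_zero.mp hc0⟩
  rw [hc0, add_zero] at hquad
  have h2 : 2 * z.re = 0 := by exact_mod_cast (mul_eq_zero.mp hquad).resolve_right hq.ne'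
  linarith

theorem exists_balanced_eigenvector {A S : Matrix n n ℂ} {B : Matrix n m ℂ}
    {C : Matrix p n ℂ} (hS : S.PosDef) (hR : A * S + S * Aᴴ + B * Bᴴ = 0)
    (hO : Aᴴ * S + S * A + Cᴴ * C = 0) {z : ℂ} {v : n → ℂ} (hv0 : v ≠ 0)
    (hv : A *ᵥ v = z • v) (hz : 0 ≤ z.re) :
    ∃ x ≠ 0, A *ᵥ x = z • x ∧ C *ᵥ x = 0 ∧ Bᴴ *ᵥ (S *ᵥ x) = 0 ∧
      ∃ s : ℂ, S *ᵥ (S *ᵥ x) = s • x := by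
  have hCB : ∀ x ≠ 0, A *ᵥ x = z • x → C *ᵥ x = 0 ∧ Bᴴ *ᵥ (S *ᵥ x) = 0 := by
    intro x hx0 hx
    obtain ⟨hz0, hC⟩ := re_eq_zero_and_mulVec_eq_zero_of_lyapunov hS hO hx0 hx hz
    have hSx0 : S *ᵥ x ≠ 0 := fun h => (hS.dotProduct_mulVec_pos hx0).ne' (by simp [h])
    have hAH : Aᴴ *ᵥ (S *ᵥ x) = -z • (S *ᵥ x) := by
      rw [conjTranspose_mulVec_of_lyapunov hO hC, hx, mulVec_smul, neg_smul]
    have hR' : Aᴴᴴ * S + S * Aᴴ + Bᴴᴴ * Bᴴ = 0 := by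
      simpa only [conjTranspose_conjTranspose] using hR
    exact ⟨hC, (re_eq_zero_and_mulVec_eq_zero_of_lyapunov hS hR' hSx0 hAH
      (by simp [hz0])).2⟩
  obtain ⟨x, hx0, hx, s, hs⟩ := exists_mulVec_eq_smul_of_mapsTo (N := S * S) hv0 hv
    fun x hx => by
      by_cases hx0 : x = 0
      · simp [hx0]
      obtain ⟨hC, hB⟩ := hCB x hx0 hx
      rw [← mulVec_mulVec, mulVec_mulVec_comm_of_lyapunov hR hO hC hB, hx, mulVec_smul,
        mulVec_smul]
  exact ⟨x, hx0, hx, (hCB x hx0 hx).1, (hCB x hx0 hx).2, s, by rwa [mulVec_mulVec]⟩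

section Truncation

variable {ι κ : Type*} [Fintype ι] [Fintype κ] {e : κ → ι}

theorem submatrix_lyapunov {R : Type*} [Semiring R] [StarRing R] [DecidableEq ι]
    [DecidableEq κ] (X : Matrix ι ι R) (Y : Matrix ι p R) (d : ι → R) (e : κ → ι) :
    (X * diagonal d + diagonal d * Xᴴ + Y * Yᴴ).submatrix e e =
      X.submatrix e e * diagonal (d ∘ e) + diagonal (d ∘ e) * (X.submatrix e e)ᴴ +
        Y.submatrix e id * (Y.submatrix e id)ᴴ := by
  ext i j
  simp only [submatrix_apply, add_apply, mul_diagonal, diagonal_mul, Function.comp_apply,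
    conjTranspose_apply]
  simp [mul_apply]

theorem mulVec_extend_zero {R q : Type*} [CommSemiring R] (he : Function.Injective e)
    (X : Matrix q ι R) (x : κ → R) :
    X *ᵥ Function.extend e x 0 = X.submatrix id e *ᵥ x := by
  ext r
  refine (Fintype.sum_of_injective e he _ _ (fun i hi => ?_) fun j => ?_).symm
  · simp [Function.extend_apply' _ _ _ (by simpa using hi)]
  · simp [he.extend_apply]

theorem diagonal_mulVec_extend_zero {R : Type*} [CommSemiring R] [DecidableEq ι]
    [DecidableEq κ] (he : Function.Injective e) (d : ι → R) (x : κ → R) :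
    diagonal d *ᵥ Function.extend e x 0 = Function.extend e (diagonal (d ∘ e) *ᵥ x) 0 := by
  ext i
  by_cases hi : ∃ j, e j = i
  · obtain ⟨j, rfl⟩ := hi
    simp [mulVec_diagonal, he.extend_apply]
  · simp [mulVec_diagonal, Function.extend_apply' _ _ _ hi]

theorem mul_self_eq_of_diagonal_mulVec {R : Type*} [CommRing R] [IsDomain R] [DecidableEq ι]
    {d w : ι → R} {s : R} (h : diagonal d *ᵥ (diagonal d *ᵥ w) = s • w) {i : ι}
    (hi : w i ≠ 0) : d i * d i = s := by
  have := congrFun h i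
  simp only [mulVec_diagonal, Pi.smul_apply, smul_eq_mul, ← mul_assoc] at this
  exact mul_right_cancel₀ hi this

theorem mulVec_extend_zero_eq_smul_of_lyapunov {K : Type*} [Field K] [StarRing K]
    [DecidableEq ι] [DecidableEq κ] {A : Matrix ι ι K} {B : Matrix ι m K} {C : Matrix p ι K}
    {d : ι → K} (hR : A * diagonal d + diagonal d * Aᴴ + B * Bᴴ = 0)
    (hO : Aᴴ * diagonal d + diagonal d * A + Cᴴ * C = 0) (he : Function.Injective e)
    (hgap : ∀ i ∉ Set.range e, ∀ j, d i * d i ≠ d (e j) * d (e j)) {z s : K} {x : κ → K}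
    (hx0 : x ≠ 0) (hx : A.submatrix e e *ᵥ x = z • x) (hC : C.submatrix id e *ᵥ x = 0)
    (hB : (B.submatrix e id)ᴴ *ᵥ (diagonal (d ∘ e) *ᵥ x) = 0)
    (hs : diagonal (d ∘ e) *ᵥ (diagonal (d ∘ e) *ᵥ x) = s • x) :
    A *ᵥ Function.extend e x 0 = z • Function.extend e x 0 := by
  set u := Function.extend e x 0 with hu
  have hCu : C *ᵥ u = 0 := by rw [mulVec_extend_zero he]; exact hC
  have hBu : Bᴴ *ᵥ (diagonal d *ᵥ u) = 0 := by
    rw [diagonal_mulVec_extend_zero he, mulVec_extend_zero he, ← conjTranspose_submatrix]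
    exact hB
  have hSu : diagonal d *ᵥ (diagonal d *ᵥ u) = s • u := by
    rw [diagonal_mulVec_extend_zero he, diagonal_mulVec_extend_zero he, hs]
    simpa using Function.extend_smul s e x (0 : ι → K)
  have hSAu : diagonal d *ᵥ (diagonal d *ᵥ (A *ᵥ u)) = s • (A *ᵥ u) := by
    rw [← mulVec_mulVec_comm_of_lyapunov hR hO hCu hBu, hSu, mulVec_smul]
  obtain ⟨j, hj⟩ := Function.ne_iff.mp hx0
  ext i
  by_cases hi : ∃ k, e k = i
  · obtain ⟨k, rfl⟩ := hi
    rw [hu, mulVec_extend_zero he, Pi.smul_apply, he.extend_apply]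
    exact congrFun hx k
  · rw [Pi.smul_apply, hu, Function.extend_apply' _ _ _ hi, Pi.zero_apply, smul_zero]
    by_contra hAu
    exact hgap i (by simpa using hi) j <| (mul_self_eq_of_diagonal_mulVec hSAu hAu).trans
      (mul_self_eq_of_diagonal_mulVec hs hj).symm

theorem re_neg_of_balanced_truncation [DecidableEq ι] [DecidableEq κ] {A : Matrix ι ι ℂ}
    {B : Matrix ι m ℂ} {C : Matrix p ι ℂ} {σ : ι → ℝ} (hσ : ∀ i, 0 < σ i)
    (hR : A * diagonal (fun i => (σ i : ℂ)) + diagonal (fun i => (σ i : ℂ)) * Aᴴ + B * Bᴴ = 0)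
    (hO : Aᴴ * diagonal (fun i => (σ i : ℂ)) + diagonal (fun i => (σ i : ℂ)) * A + Cᴴ * C = 0)
    (hA : ∀ z ∈ A.charpoly.roots, z.re < 0) (he : Function.Injective e)
    (hgap : ∀ i ∉ Set.range e, ∀ j, σ i ≠ σ (e j)) :
    ∀ z ∈ (A.submatrix e e).charpoly.roots, z.re < 0 := by
  intro z hz
  by_contra! hre
  set d : ι → ℂ := fun i => (σ i : ℂ)
  obtain ⟨v, hv0, hv⟩ := (mem_roots_charpoly_iff_exists_mulVec_eq_smul _ _).mp hz
  have hS : (diagonal (d ∘ e)).PosDef := PosDef.diagonal fun j => by simpa [d] using hσ (e j)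
  have hR₁ := submatrix_lyapunov A B d e
  rw [hR] at hR₁
  have hO₁ := submatrix_lyapunov Aᴴ Cᴴ d e
  rw [conjTranspose_conjTranspose, conjTranspose_conjTranspose, hO, ← conjTranspose_submatrix,
    ← conjTranspose_submatrix, conjTranspose_conjTranspose, conjTranspose_conjTranspose] at hO₁
  obtain ⟨x, hx0, hx, hC, hB, s, hs⟩ :=
    exists_balanced_eigenvector hS hR₁.symm hO₁.symm hv0 hv hre
  have hgap' : ∀ i ∉ Set.range e, ∀ j, d i * d i ≠ d (e j) * d (e j) := fun i hi j h =>
    hgap i hi j <| (mul_self_inj (hσ i).le (hσ (e j)).le).mp <|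
      Complex.ofReal_injective (by push_cast; exact h)
  have hu0 : Function.extend e x 0 ≠ 0 := by
    obtain ⟨j, hj⟩ := Function.ne_iff.mp hx0
    exact fun h => hj (by simpa [he.extend_apply] using congrFun h (e j))
  exact (hA z ((mem_roots_charpoly_iff_exists_mulVec_eq_smul _ _).mpr ⟨_, hu0,
    mulVec_extend_zero_eq_smul_of_lyapunov hR hO he hgap' hx0 hx hC hB hs⟩)).not_ge hre

end Truncation

theorem transpose_map_ofReal {k l : Type*} (X : Matrix k l ℝ) :
    Xᵀ.map Complex.ofReal = (X.map Complex.ofReal)ᴴ := by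
  rw [← conjTranspose_eq_transpose_of_trivial,
    conjTranspose_map _ fun r => (Complex.conj_ofReal r).symm]

theorem lyapunov_map_ofReal [DecidableEq n] {A : Matrix n n ℝ} {B : Matrix n m ℝ}
    {σ : n → ℝ} (h : A * diagonal σ + diagonal σ * Aᵀ + B * Bᵀ = 0) :
    A.map Complex.ofReal * diagonal (fun i => (σ i : ℂ)) +
      diagonal (fun i => (σ i : ℂ)) * (A.map Complex.ofReal)ᴴ +
        B.map Complex.ofReal * (B.map Complex.ofReal)ᴴ = 0 := by
  ext i j
  have := congrArg Complex.ofReal (congrFun (congrFun h i) j)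
  simp only [add_apply, mul_diagonal, diagonal_mul, zero_apply] at this ⊢
  simpa [mul_apply] using this

end Matrix

/-- (Balanced truncation preserves stability relative to the shifted
axis.) If `A + λI` is Hurwitz and the realization is balanced with rate `λ` — the shifted
Lyapunov equations hold with gramian `Σ = diag(σ₁, …, σₙ)`, `σ₁ ≥ … ≥ σₙ > 0` — and
`σ_ν > σ_{ν+1}` for some `1 ≤ ν < n`, then the leading `ν × ν` block `A₁₁` of `A` is such
that every eigenvalue of `A₁₁ + λI` has negative real part. -/
theorem statement11 {n m l ν : ℕ} (hνn : ν < n) (lam : ℝ)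
    (A : Matrix (Fin n) (Fin n) ℝ) (B : Matrix (Fin n) (Fin m) ℝ)
    (C : Matrix (Fin l) (Fin n) ℝ)
    (hHurwitz : ∀ z ∈ (((A + lam • 1).map Complex.ofReal).charpoly).roots, z.re < 0)
    (σ : Fin n → ℝ)
    (hσdec : ∀ i j : Fin n, i ≤ j → σ j ≤ σ i) (hσpos : ∀ i : Fin n, 0 < σ i)
    (hreach : (A + lam • 1) * Matrix.diagonal σ +
      Matrix.diagonal σ * (A + lam • 1)ᵀ + B * Bᵀ = 0)
    (hobs : (A + lam • 1)ᵀ * Matrix.diagonal σ +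
      Matrix.diagonal σ * (A + lam • 1) + Cᵀ * C = 0)
    (hgap : σ ⟨ν, hνn⟩ < σ ⟨ν - 1, by omega⟩) :
    ∀ z ∈ (((A.submatrix (Fin.castLE hνn.le) (Fin.castLE hνn.le) + lam • 1).map
      Complex.ofReal).charpoly).roots, z.re < 0 := by
  have he := Fin.castLE_injective hνn.le
  set e := Fin.castLE hνn.le
  have hR := lyapunov_map_ofReal hreach
  have hO := lyapunov_map_ofReal (A := (A + lam • 1)ᵀ) (B := Cᵀ) (by simpa using hobs)
  rw [transpose_map_ofReal, transpose_map_ofReal, conjTranspose_conjTranspose,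
    conjTranspose_conjTranspose] at hO
  have hsub : (A.submatrix e e + lam • 1).map Complex.ofReal =
      ((A + lam • 1).map Complex.ofReal).submatrix e e := by
    ext i j
    simp [one_apply, he.eq_iff]
  have hgap' : ∀ i ∉ Set.range e, ∀ j, σ i ≠ σ (e j) := by
    intro i hi j
    have hνi : ν ≤ i := by
      by_contra! h
      exact hi ⟨⟨i, h⟩, rfl⟩
    exact (lt_of_le_of_lt (hσdec _ _ (Fin.le_def.mpr hνi))
      (hgap.trans_le (hσdec _ _ (Fin.le_def.mpr (Nat.le_sub_one_of_lt j.2))))).ne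
  rw [hsub]
  exact re_neg_of_balanced_truncation hσpos hR hO hHurwitz he hgap'
end
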